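/- A language L ⊆ WM(A) is a VPL if and only if its topological closure in the completion of WM(A) is clopen; moreover the maps L ↦ closure(L) and K ↦ K ∩ WM(A) are mutually inverse Boolean algebra isomorphisms between the Boolean algebra of VPLs over A and the Boolean algebra of clopen subsets of the completion. -/

import Mathlib

inductive VPKind : Type
  | call | ret | intern
deriving DecidableEq

class VPAlphabet (A : Type) where
  kind : A → VPKind

variable {A : Type} [VPAlphabet A]

inductive WellMatched : List A → Prop
  | nil : WellMatched []
  | intern (c : A) (hc : VPAlphabet.kind c = VPKind.intern) : WellMatched [c]
  | ext (a b : A) (w : List A) (ha : VPAlphabet.kind a = VPKind.call)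
      (hb : VPAlphabet.kind b = VPKind.ret) (hw : WellMatched w) :
      WellMatched (a :: w ++ [b])
  | append (u v : List A) (hu : WellMatched u) (hv : WellMatched v) : WellMatched (u ++ v)

theorem wm_insert {u v x : List A} (h : WellMatched (u ++ v)) (hx : WellMatched x) :
    WellMatched (u ++ x ++ v) := by
  suffices H : ∀ w, WellMatched w → ∀ u' v' : List A, w = u' ++ v' →
      WellMatched (u' ++ x ++ v') from H _ h u v rfl
  intro w hw
  induction hw with
  | nil =>
    intro u' v' huv
    obtain ⟨rfl, rfl⟩ := List.append_eq_nil_iff.mp huv.symm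
    simpa using hx
  | intern c hc =>
    intro u' v' huv
    rcases u' with _ | ⟨a, u''⟩
    · simp only [List.nil_append] at huv
      subst huv
      simpa using WellMatched.append x [c] hx (WellMatched.intern c hc)
    · have h1 : c = a := by injection huv
      have h2 : ([] : List A) = u'' ++ v' := by injection huv
      obtain ⟨rfl, rfl⟩ := List.append_eq_nil_iff.mp h2.symm
      subst h1
      simpa using WellMatched.append [c] x (WellMatched.intern c hc) hx
  | ext a b w' ha hb hw' ih =>
    intro u' v' huv
    rcases u' with _ | ⟨a'', u''⟩
    · simp only [List.nil_append] at huv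
      subst huv
      simpa using WellMatched.append x _ hx (WellMatched.ext a b w' ha hb hw')
    · have h1 : a = a'' := by injection huv
      have huv2 : w' ++ [b] = u'' ++ v' := by injection huv
      subst h1
      rcases List.eq_nil_or_concat v' with rfl | ⟨v'', b'', rfl⟩
      · have h3 : u'' = w' ++ [b] := by simpa using huv2.symm
        subst h3
        simpa using WellMatched.append _ x (WellMatched.ext a b w' ha hb hw') hx
      · have h4 : w' = u'' ++ v'' ∧ [b] = [b''] :=
          List.append_inj' (by simpa [List.append_assoc] using huv2) rfl
        obtain ⟨rfl, hb'⟩ := h4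
        have hbb : b = b'' := by injection hb'
        subst hbb
        have := WellMatched.ext a b _ ha hb (ih u'' v'' rfl)
        simpa [List.append_assoc] using this
  | append w₁ w₂ h₁ h₂ ih₁ ih₂ =>
    intro u' v' huv
    rcases List.append_eq_append_iff.mp huv with ⟨a', rfl, rfl⟩ | ⟨c', rfl, rfl⟩
    · have := WellMatched.append _ _ h₁ (ih₂ a' v' rfl)
      simpa [List.append_assoc] using this
    · have := WellMatched.append _ _ (ih₁ u' c' rfl) h₂
      simpa [List.append_assoc] using this

def WM (A : Type) [VPAlphabet A] : Type := {w : List A // WellMatched w}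

instance : Monoid (WM A) where
  one := ⟨[], WellMatched.nil⟩
  mul u v := ⟨u.1 ++ v.1, WellMatched.append _ _ u.2 v.2⟩
  mul_assoc a b c := Subtype.ext (List.append_assoc _ _ _)
  one_mul a := Subtype.ext (List.nil_append _)
  mul_one a := Subtype.ext (List.append_nil _)

@[simp] theorem WM.mul_val (x y : WM A) : (x * y).1 = x.1 ++ y.1 := rfl
@[simp] theorem WM.one_val : (1 : WM A).1 = [] := rfl

instance : Nonempty (WM A) := ⟨1⟩

def extWord (u v : List A) (h : WellMatched (u ++ v)) (x : WM A) : WM A :=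
  ⟨u ++ x.1 ++ v, wm_insert h x.2⟩

@[simp] theorem extWord_val (u v : List A) (h : WellMatched (u ++ v)) (x : WM A) :
    (extWord u v h x).1 = u ++ x.1 ++ v := rfl

structure ExtAlgebra (R : Type*) [Monoid R] where
  O : Submonoid (Function.End R)
  mulLeft_mem : ∀ r : R, (fun x => r * x) ∈ O
  mulRight_mem : ∀ r : R, (fun x => x * r) ∈ O

structure ExtAlgHom {R S : Type*} [Monoid R] [Monoid S]
    (ER : ExtAlgebra R) (ES : ExtAlgebra S) where
  toMonoidHom : R →* S
  opMap : ER.O →* ES.O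
  compat : ∀ (e : ER.O) (r : R),
    (opMap e : Function.End S) (toMonoidHom r) = toMonoidHom ((e : Function.End R) r)

/-- A morphism of `Ext`-algebras from the free `Ext`-algebra of well-matched words
into an `Ext`-algebra `R`, given by its monoid part and by the images of the
operations `ext_{u,v}`. -/
structure ExtHomWM (A : Type) [VPAlphabet A] {R : Type*} [Monoid R] (ER : ExtAlgebra R) where
  toMonoidHom : WM A →* R
  op : ∀ u v : List A, WellMatched (u ++ v) → ER.O
  op_one : op [] [] WellMatched.nil = 1
  op_comp : ∀ u v (h : WellMatched (u ++ v)) u' v' (h' : WellMatched (u' ++ v'))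
      (h'' : WellMatched ((u ++ u') ++ (v' ++ v))),
      op (u ++ u') (v' ++ v) h'' = op u v h * op u' v' h'
  op_spec : ∀ u v (h : WellMatched (u ++ v)) (x : WM A),
      (op u v h : Function.End R) (toMonoidHom x) = toMonoidHom (extWord u v h x)

/-- `R` recognises `L` via the morphism `φ` when `L` is the preimage of its image. -/
def Recognises {R : Type*} [Monoid R] {ER : ExtAlgebra R}
    (φ : ExtHomWM A ER) (L : Set (WM A)) : Prop :=
  L = φ.toMonoidHom ⁻¹' (φ.toMonoidHom '' L)

/-- The free `Ext`-algebra structure on the monoid of well-matched words. -/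
def freeExt (A : Type) [VPAlphabet A] : ExtAlgebra (WM A) where
  O :=
    { carrier := {e | ∃ u v, ∃ h : WellMatched (u ++ v), ∀ x : WM A, e x = extWord u v h x}
      one_mem' := ⟨[], [], WellMatched.nil, fun x => Subtype.ext (by show x.1 = [] ++ x.1 ++ []; simp)⟩
      mul_mem' := by
        rintro e f ⟨u, v, h, he⟩ ⟨u', v', h', hf⟩
        have h'' : WellMatched ((u ++ u') ++ (v' ++ v)) := by
          simpa [List.append_assoc] using wm_insert h h'
        exact ⟨u ++ u', v' ++ v, h'', fun x => by
          rw [show (e * f) x = e (f x) from rfl, hf, he]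
          exact Subtype.ext (by simp [List.append_assoc])⟩ }
  mulLeft_mem r := ⟨r.1, [], by simpa using r.2, fun x => Subtype.ext (by simp)⟩
  mulRight_mem r := ⟨[], r.1, by simpa using r.2, fun x => Subtype.ext (by simp)⟩

/-- A sub-`Ext`-algebra of an `Ext`-algebra. -/
structure SubExt {S : Type*} [Monoid S] (ES : ExtAlgebra S) where
  carrier : Submonoid S
  ops : Submonoid (Function.End S)
  ops_le : ops ≤ ES.O
  maps_to : ∀ e ∈ ops, ∀ x ∈ carrier, e x ∈ carrier
  mulLeft_mem : ∀ r ∈ carrier, (fun x => r * x) ∈ ops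
  mulRight_mem : ∀ r ∈ carrier, (fun x => x * r) ∈ ops

/-- The `Ext`-algebra structure induced on a sub-`Ext`-algebra. -/
def SubExt.toExtAlgebra {S : Type*} [Monoid S] {ES : ExtAlgebra S} (T : SubExt ES) :
    ExtAlgebra T.carrier where
  O :=
    { carrier := {e : Function.End T.carrier | ∃ f ∈ T.ops, ∀ x : T.carrier, (e x : S) = f x}
      one_mem' := ⟨1, T.ops.one_mem, fun _ => rfl⟩
      mul_mem' := by
        rintro e e' ⟨f, hf, he⟩ ⟨f', hf', he'⟩
        exact ⟨f * f', mul_mem hf hf', fun x => by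
          rw [show (e * e') x = e (e' x) from rfl, show (f * f') (x : S) = f (f' x) from rfl,
            ← he', he]⟩ }
  mulLeft_mem r := ⟨fun x => (r : S) * x, T.mulLeft_mem r r.2, fun _ => rfl⟩
  mulRight_mem r := ⟨fun x => x * (r : S), T.mulRight_mem r r.2, fun _ => rfl⟩

/-- `ER` is a quotient of `ES` if there is a surjective morphism of `Ext`-algebras
from `ES` onto `ER`. -/
def IsQuotientOf {R S : Type*} [Monoid R] [Monoid S]
    (ER : ExtAlgebra R) (ES : ExtAlgebra S) : Prop :=
  ∃ h : ExtAlgHom ES ER, Function.Surjective h.toMonoidHom ∧ Function.Surjective h.opMap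

/-- Bundled finite `Ext`-algebras. -/
structure BExt : Type 1 where
  carrier : Type
  [mon : Monoid carrier]
  [fin : Finite carrier]
  ext : ExtAlgebra carrier

attribute [instance] BExt.mon BExt.fin

section ListTake

variable {B : Type*}

theorem take_take_append (N k : ℕ) (hk : k ≤ N) (x v : List B) :
    ((x.take N) ++ v).take k = (x ++ v).take k := by
  rw [List.take_append, List.take_append, List.take_take,
    List.length_take]
  rw [min_eq_left hk]
  congr 2
  omega

theorem take_mid (N : ℕ) (u s v : List B) :
    (u ++ s.take N ++ v).take N = (u ++ s ++ v).take N := by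
  conv_lhs => rw [List.append_assoc, List.take_append]
  conv_rhs => rw [List.append_assoc, List.take_append]
  congr 1
  exact take_take_append N _ (Nat.sub_le _ _) s v

theorem take_append_right (N : ℕ) (u s : List B) :
    (u ++ s.take N).take N = (u ++ s).take N := by
  have := take_mid N u s ([] : List B)
  simpa using this

end ListTake

/-- The monoid of words of length at most `N`, with truncated concatenation. -/
def TruncM (B : Type) (N : ℕ) : Type := {l : List B // l.length ≤ N}

instance {B : Type} {N : ℕ} : Monoid (TruncM B N) where
  one := ⟨[], by simp⟩
  mul u v := ⟨(u.1 ++ v.1).take N, by rw [List.length_take]; exact min_le_left _ _⟩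
  mul_assoc a b c := Subtype.ext (by
    show ((a.1 ++ b.1).take N ++ c.1).take N = (a.1 ++ (b.1 ++ c.1).take N).take N
    rw [take_take_append N N le_rfl, take_append_right, List.append_assoc])
  one_mul a := Subtype.ext (by
    show (([] : List B) ++ a.1).take N = a.1
    rw [List.nil_append]
    exact List.take_of_length_le a.2)
  mul_one a := Subtype.ext (by
    show (a.1 ++ ([] : List B)).take N = a.1
    rw [List.append_nil]
    exact List.take_of_length_le a.2)

@[simp] theorem TruncM.one_val {B : Type} {N : ℕ} : (1 : TruncM B N).1 = [] := rfl
@[simp] theorem TruncM.mul_val {B : Type} {N : ℕ} (u v : TruncM B N) :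
    (u * v).1 = (u.1 ++ v.1).take N := rfl

instance {B : Type} [Finite B] {N : ℕ} : Finite (TruncM B N) := by
  haveI : Finite (Option B) := Finite.of_equiv (B ⊕ (PUnit : Type)) (Equiv.optionEquivSumPUnit B).symm
  refine Finite.of_injective
    (fun l : TruncM B N => fun i : Fin (N + 1) => l.1[(i : ℕ)]?) ?_
  intro a b hab
  apply Subtype.ext
  apply List.ext_getElem?
  intro i
  by_cases hi : i < N + 1
  · exact congrFun hab ⟨i, hi⟩
  · have ha := a.2
    have hb := b.2
    rw [List.getElem?_eq_none (by omega), List.getElem?_eq_none (by omega)]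

/-- Truncation is a monoid morphism on well-matched words. -/
def truncMonoidHom (A : Type) [VPAlphabet A] (N : ℕ) : WM A →* TruncM A N where
  toFun w := ⟨w.1.take N, by rw [List.length_take]; exact min_le_left _ _⟩
  map_one' := Subtype.ext (by simp)
  map_mul' u v := Subtype.ext (by
    show (u.1 ++ v.1).take N = (u.1.take N ++ v.1.take N).take N
    rw [take_take_append N N le_rfl, take_append_right])

/-- The truncation monoid as an `Ext`-algebra with all functions as operations. -/
def truncExt (A : Type) [VPAlphabet A] (N : ℕ) : ExtAlgebra (TruncM A N) where
  O := ⊤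
  mulLeft_mem _ := trivial
  mulRight_mem _ := trivial

def truncOp {A : Type} [VPAlphabet A] {N : ℕ} (u v : List A) : Function.End (TruncM A N) :=
  fun m => ⟨(u ++ m.1 ++ v).take N, by rw [List.length_take]; exact min_le_left _ _⟩

/-- The truncation morphism of `Ext`-algebras. -/
def truncExtHom (A : Type) [VPAlphabet A] (N : ℕ) : ExtHomWM A (truncExt A N) where
  toMonoidHom := truncMonoidHom A N
  op u v _ := ⟨truncOp u v, trivial⟩
  op_one := by
    apply Subtype.ext
    funext m
    apply Subtype.ext
    show (([] : List A) ++ m.1 ++ []).take N = m.1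
    simpa using List.take_of_length_le m.2
  op_comp u v h u' v' h' h'' := by
    apply Subtype.ext
    funext m
    apply Subtype.ext
    show ((u ++ u') ++ m.1 ++ (v' ++ v)).take N = (u ++ ((u' ++ m.1 ++ v').take N) ++ v).take N
    rw [take_mid]
    simp [List.append_assoc]
  op_spec u v h x := by
    apply Subtype.ext
    show (u ++ (x.1.take N) ++ v).take N = (u ++ x.1 ++ v).take N
    exact take_mid N u x.1 v

/-- `x` and `y` can be separated by a finite `Ext`-algebra of cardinality at most `n`. -/
def SepBound (n : ℕ) (x y : WM A) : Prop :=
  ∃ (R : BExt) (φ : ExtHomWM A R.ext),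
    Nat.card R.carrier ≤ n ∧ φ.toMonoidHom x ≠ φ.toMonoidHom y

/-- The minimal cardinality of a finite `Ext`-algebra separating `x` and `y`. -/
noncomputable def sepDeg (x y : WM A) : ℕ := sInf {n | SepBound n x y}

/-- The profinite (ultra)metric on well-matched words. -/
noncomputable def pdist (x y : WM A) : ℝ :=
  open scoped Classical in if x = y then 0 else (2 : ℝ)⁻¹ ^ sepDeg x y

theorem pdist_nonneg (x y : WM A) : 0 ≤ pdist x y := by
  unfold pdist
  split
  · exact le_rfl
  · positivity

theorem sepBound_comm {n : ℕ} {x y : WM A} : SepBound n x y ↔ SepBound n y x := by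
  constructor <;> rintro ⟨R, φ, h1, h2⟩ <;> exact ⟨R, φ, h1, h2.symm⟩

theorem pdist_comm (x y : WM A) : pdist x y = pdist y x := by
  have h1 : sepDeg x y = sepDeg y x := by
    unfold sepDeg
    congr 1
    ext n
    exact sepBound_comm
  rcases eq_or_ne x y with rfl | h
  · rfl
  · unfold pdist
    rw [if_neg h, if_neg (Ne.symm h), h1]

theorem exists_sepBound [Finite A] {x y : WM A} (hxy : x ≠ y) : ∃ n, SepBound n x y := by
  classical
  set N := max x.1.length y.1.length with hN
  refine ⟨Nat.card (TruncM A N),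
    { carrier := TruncM A N, ext := truncExt A N }, truncExtHom A N, le_rfl, ?_⟩
  intro hcontra
  have hv : x.1.take N = y.1.take N := congrArg Subtype.val hcontra
  rw [List.take_of_length_le (le_max_left _ _ : x.1.length ≤ N),
    List.take_of_length_le (le_max_right _ _ : y.1.length ≤ N)] at hv
  exact hxy (Subtype.ext hv)

theorem pdist_ultra [Finite A] (x y z : WM A) :
    pdist x z ≤ max (pdist x y) (pdist y z) := by
  rcases eq_or_ne x z with rfl | hxz
  · calc pdist x x = 0 := by simp [pdist]
      _ ≤ _ := le_max_of_le_left (pdist_nonneg _ _)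
  rcases eq_or_ne x y with rfl | hxy
  · exact le_max_of_le_right le_rfl
  rcases eq_or_ne y z with rfl | hyz
  · exact le_max_of_le_left le_rfl
  have hSne : {n | SepBound n x z}.Nonempty := exists_sepBound hxz
  obtain ⟨R, φ, hcard, hne⟩ := Nat.sInf_mem hSne
  by_cases hxy' : φ.toMonoidHom x = φ.toMonoidHom y
  · have hb : SepBound (sepDeg x z) y z := ⟨R, φ, hcard, by rw [← hxy']; exact hne⟩
    have hle : sepDeg y z ≤ sepDeg x z := Nat.sInf_le hb
    calc pdist x z = (2 : ℝ)⁻¹ ^ sepDeg x z := by rw [pdist, if_neg hxz]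
      _ ≤ (2 : ℝ)⁻¹ ^ sepDeg y z := pow_le_pow_of_le_one (by norm_num) (by norm_num) hle
      _ = pdist y z := by rw [pdist, if_neg hyz]
      _ ≤ _ := le_max_right _ _
  · have hb : SepBound (sepDeg x z) x y := ⟨R, φ, hcard, hxy'⟩
    have hle : sepDeg x y ≤ sepDeg x z := Nat.sInf_le hb
    calc pdist x z = (2 : ℝ)⁻¹ ^ sepDeg x z := by rw [pdist, if_neg hxz]
      _ ≤ (2 : ℝ)⁻¹ ^ sepDeg x y := pow_le_pow_of_le_one (by norm_num) (by norm_num) hle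
      _ = pdist x y := by rw [pdist, if_neg hxy]
      _ ≤ _ := le_max_left _ _

noncomputable instance WM.metricSpace [Finite A] : MetricSpace (WM A) where
  dist := pdist
  dist_self x := by simp [pdist]
  dist_comm := pdist_comm
  dist_triangle x y z := by
    refine (pdist_ultra x y z).trans (max_le ?_ ?_)
    · exact le_add_of_nonneg_right (pdist_nonneg _ _)
    · exact le_add_of_nonneg_left (pdist_nonneg _ _)
  eq_of_dist_eq_zero := by
    intro x y h
    by_contra hxy
    have h' : pdist x y = 0 := h
    rw [pdist, if_neg hxy] at h'
    exact absurd h' (ne_of_gt (pow_pos (by norm_num) _))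

/-! ### Visibly pushdown automata -/

structure VPA (A : Type) [VPAlphabet A] where
  Q : Type
  [finQ : Finite Q]
  q0 : Q
  Γ : Type
  [finΓ : Finite Γ]
  bot : Γ
  δ : A → Q → Γ → Q × List Γ
  F : Set Q
  call_spec : ∀ a q G, VPAlphabet.kind a = VPKind.call → ∃ G', (δ a q G).2 = [G', G]
  ret_spec : ∀ a q G, VPAlphabet.kind a = VPKind.ret → (δ a q G).2 = []
  int_spec : ∀ a q G, VPAlphabet.kind a = VPKind.intern → (δ a q G).2 = [G]

attribute [instance] VPA.finQ VPA.finΓ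

def VPA.runAux (M : VPA A) : List A → M.Q → List M.Γ → M.Q × List M.Γ
  | [], q, s => (q, s)
  | _ :: w, q, [] => M.runAux w q []
  | a :: w, q, G :: s => M.runAux w (M.δ a q G).1 ((M.δ a q G).2 ++ s)

def VPA.Accepts (M : VPA A) (w : List A) : Prop :=
  (M.runAux w M.q0 [M.bot]).1 ∈ M.F ∧ (M.runAux w M.q0 [M.bot]).2 = [M.bot]

/-- The language of well-matched words accepted by a VPA. -/
def VPA.lang (M : VPA A) : Set (WM A) := {w | M.Accepts w.1}

/-- `L` is a visibly pushdown language: it is accepted by a visibly pushdown automaton. -/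
def IsVPL (L : Set (WM A)) : Prop := ∃ M : VPA A, L = M.lang

/-!
A VPL is recognised by the behaviour monoid of its automaton (the action of a well-matched word
on states, for each top-of-stack symbol), a finite `Ext`-algebra; so words close enough in the
profinite metric are not separated by it, i.e. the indicator of a VPL into `Bool` is uniformly
continuous. Conversely, the `Ext`-algebras with at most `n` elements can be coded by finitely
many tables, and a single visibly pushdown automaton evaluates a word in all codes at once. Two
words with the same evaluation are not separated by any such algebra, hence lie at distance
`< 2⁻ⁿ`. This makes `WM A` totally bounded (so its completion is compact), and it shows that a
language with uniformly continuous indicator is a VPL: accept the evaluations of its words.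

In the compact completion, clopen sets have uniformly continuous indicators, and a uniformly
continuous `Bool`-valued map extends continuously, so VPLs are exactly the traces of clopen
sets. Since `WM A` is discrete (`x` is separated from every other word by truncation at length
`|x| + 1`), a language is recovered from its closure.
-/

open UniformSpace

theorem Metric.uniformContinuous_boolIndicator_iff {α : Type*} [PseudoMetricSpace α]
    {L : Set α} :
    UniformContinuous L.boolIndicator ↔ ∃ ε > 0, ∀ x y, dist x y < ε → (x ∈ L ↔ y ∈ L) := by
  rw [Metric.uniformity_basis_dist.uniformContinuous_iff
    (DiscreteUniformity.eq_principal_setRelId Bool ▸ Filter.hasBasis_principal SetRel.id)]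
  simp only [Set.mem_ofPred_eq, SetRel.id, Set.boolIndicator, Bool.if_false_right,
    Bool.and_true, decide_eq_decide, forall_const, gt_iff_lt]

theorem UniformSpace.Completion.compactSpace_of_totallyBounded {α : Type*} [UniformSpace α]
    (h : TotallyBounded (Set.univ : Set α)) : CompactSpace (Completion α) := by
  have hrange : TotallyBounded (Set.range ((↑) : α → Completion α)) := by
    simpa [Set.image_univ] using h.image (Completion.uniformContinuous_coe α)
  have huniv : TotallyBounded (Set.univ : Set (Completion α)) := by
    rw [← Completion.denseRange_coe.closure_range]
    exact hrange.closure
  exact ⟨huniv.isCompact_of_isClosed isClosed_univ⟩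

section Completion

variable {α : Type*} [UniformSpace α]

theorem UniformSpace.Completion.closure_image_coe_preimage_singleton {f : α → Bool}
    (hf : UniformContinuous f) (b : Bool) :
    closure (((↑) : α → Completion α) '' (f ⁻¹' {b})) =
      Completion.extension f ⁻¹' {b} := by
  set g := Completion.extension f
  have hg : Continuous g := Completion.continuous_extension
  have himage : ((↑) : α → Completion α) '' (f ⁻¹' {b}) =
      g ⁻¹' {b} ∩ Set.range ((↑) : α → Completion α) := by
    ext z
    constructor
    · rintro ⟨x, hx, rfl⟩
      exact ⟨(Completion.extension_coe hf x).trans hx, x, rfl⟩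
    · rintro ⟨hz, x, rfl⟩
      exact ⟨x, (Completion.extension_coe hf x).symm.trans hz, rfl⟩
  apply subset_antisymm
  · exact (isClosed_singleton.preimage hg).closure_subset_iff.mpr
      (himage ▸ Set.inter_subset_left)
  · rw [himage]
    exact Completion.denseRange_coe.open_subset_closure_inter ((isOpen_discrete _).preimage hg)

variable {L : Set α}

theorem UniformSpace.Completion.isClopen_closure_image_coe
    (hL : UniformContinuous L.boolIndicator) :
    IsClopen (closure (((↑) : α → Completion α) '' L)) := by
  rw [← Set.preimage_boolIndicator_true L, closure_image_coe_preimage_singleton hL]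
  exact (isClopen_discrete _).preimage Completion.continuous_extension

theorem UniformSpace.Completion.closure_image_coe_compl
    (hL : UniformContinuous L.boolIndicator) :
    closure (((↑) : α → Completion α) '' Lᶜ) =
      (closure (((↑) : α → Completion α) '' L))ᶜ := by
  have htrue := closure_image_coe_preimage_singleton hL true
  have hfalse := closure_image_coe_preimage_singleton hL false
  rw [Set.preimage_boolIndicator_true] at htrue
  rw [Set.preimage_boolIndicator_false] at hfalse
  rw [htrue, hfalse]
  ext z
  simp

theorem UniformSpace.Completion.preimage_coe_closure_image [T0Space α] [DiscreteTopology α]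
    (L : Set α) :
    ((↑) : α → Completion α) ⁻¹' closure (((↑) : α → Completion α) '' L) = L := by
  rw [← Completion.isDenseEmbedding_coe.isEmbedding.closure_eq_preimage_closure_image,
    (isClosed_discrete L).closure_eq]

theorem UniformSpace.Completion.closure_image_coe_preimage {K : Set (Completion α)}
    (hK : IsClopen K) :
    closure (((↑) : α → Completion α) '' (((↑) : α → Completion α) ⁻¹' K)) = K := by
  rw [Set.image_preimage_eq_inter_range]
  exact subset_antisymm (hK.isClosed.closure_subset_iff.2 Set.inter_subset_left)
    (Completion.denseRange_coe.open_subset_closure_inter hK.isOpen)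

theorem UniformSpace.Completion.uniformContinuous_boolIndicator_preimage_coe
    [CompactSpace (Completion α)] {K : Set (Completion α)} (hK : IsClopen K) :
    UniformContinuous (((↑) : α → Completion α) ⁻¹' K).boolIndicator :=
  (CompactSpace.uniformContinuous_of_continuous
    ((continuous_boolIndicator_iff_isClopen K).2 hK)).comp (Completion.uniformContinuous_coe α)

end Completion

theorem extWord_nil (x : WM A) : extWord [] [] WellMatched.nil x = x :=
  Subtype.ext (by simp)

theorem extWord_extWord {u v u' v' : List A} (h : WellMatched (u ++ v))
    (h' : WellMatched (u' ++ v')) (h'' : WellMatched ((u ++ u') ++ (v' ++ v))) (x : WM A) :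
    extWord u v h (extWord u' v' h' x) = extWord (u ++ u') (v' ++ v) h'' x :=
  Subtype.ext (by simp)

def fullExt (R : Type*) [Monoid R] : ExtAlgebra R where
  O := ⊤
  mulLeft_mem _ := trivial
  mulRight_mem _ := trivial

noncomputable def ExtHomWM.ofFactorsThrough {R : Type*} [Monoid R] (φ : WM A →* R)
    (hφ : ∀ u v (h : WellMatched (u ++ v)), Function.FactorsThrough (φ ∘ extWord u v h) φ) :
    ExtHomWM A (fullExt R) where
  toMonoidHom := φ
  op u v h := ⟨Function.extend φ (φ ∘ extWord u v h) id, trivial⟩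
  op_one := by
    refine Subtype.ext (funext fun r => ?_)
    by_cases hr : ∃ x, φ x = r
    · obtain ⟨x, rfl⟩ := hr
      change Function.extend φ _ id (φ x) = φ x
      rw [(hφ _ _ _).extend_apply, Function.comp_apply, extWord_nil]
    · exact Function.extend_apply' _ _ r hr
  op_comp u v h u' v' h' h'' := by
    refine Subtype.ext (funext fun r => ?_)
    by_cases hr : ∃ x, φ x = r
    · obtain ⟨x, rfl⟩ := hr
      change Function.extend φ _ id (φ x) =
        Function.extend φ _ id (Function.extend φ _ id (φ x))
      rw [(hφ _ _ h'').extend_apply, (hφ _ _ h').extend_apply, Function.comp_apply,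
        Function.comp_apply, (hφ _ _ h).extend_apply, Function.comp_apply, extWord_extWord]
    · change Function.extend φ _ id r = Function.extend φ _ id (Function.extend φ _ id r)
      rw [Function.extend_apply' _ _ r hr, Function.extend_apply' _ _ r hr, id_eq,
        Function.extend_apply' _ _ r hr, id_eq]
  op_spec u v h x := (hφ u v h).extend_apply id x

theorem SepBound.mono {m n : ℕ} {x y : WM A} (h : SepBound m x y) (hmn : m ≤ n) :
    SepBound n x y :=
  let ⟨R, φ, hcard, hne⟩ := h
  ⟨R, φ, hcard.trans hmn, hne⟩

namespace WM

variable [Finite A] {n : ℕ} {x y : WM A}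

theorem dist_eq_of_ne (hxy : x ≠ y) : dist x y = (2 : ℝ)⁻¹ ^ sepDeg x y := if_neg hxy

theorem inv_two_pow_le_dist_of_sepBound (hxy : x ≠ y) (h : SepBound n x y) :
    (2 : ℝ)⁻¹ ^ n ≤ dist x y := by
  rw [dist_eq_of_ne hxy]
  exact pow_le_pow_of_le_one (by norm_num) (by norm_num) (Nat.sInf_le h)

theorem dist_lt_of_not_sepBound (h : ¬ SepBound n x y) : dist x y < (2 : ℝ)⁻¹ ^ n := by
  rcases eq_or_ne x y with rfl | hxy
  · rw [dist_self]
    positivity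
  have hn : n < sepDeg x y := by
    by_contra! hle
    exact h (SepBound.mono (Nat.sInf_mem (exists_sepBound hxy)) hle)
  rw [dist_eq_of_ne hxy]
  exact pow_lt_pow_right_of_lt_one₀ (by norm_num) (by norm_num) hn

theorem sepBound_truncation (hxy : x ≠ y) :
    SepBound (Nat.card (TruncM A (x.1.length + 1))) x y := by
  refine ⟨⟨TruncM A (x.1.length + 1), truncExt A _⟩, truncExtHom A _, le_rfl,
    fun h => hxy ?_⟩
  have htake : y.1.take (x.1.length + 1) = x.1 := by
    have h' : x.1.take (x.1.length + 1) = y.1.take (x.1.length + 1) := congrArg Subtype.val h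
    rwa [List.take_of_length_le (Nat.le_succ _), eq_comm] at h'
  have hy : y.1.length ≤ x.1.length + 1 := by
    have := congrArg List.length htake
    rw [List.length_take] at this
    omega
  exact Subtype.ext (by rw [← htake, List.take_of_length_le hy])

instance : DiscreteTopology (WM A) := by
  refine discreteTopology_iff_isOpen_singleton.2 fun x => Metric.isOpen_singleton_iff.2
    ⟨_, pow_pos (by norm_num : (0 : ℝ) < 2⁻¹) (Nat.card (TruncM A (x.1.length + 1))),
      fun y hy => ?_⟩
  by_contra hyx
  rw [dist_comm] at hy
  have hxy : x ≠ y := Ne.symm hyx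
  exact (inv_two_pow_le_dist_of_sepBound hxy (sepBound_truncation hxy)).not_gt hy

end WM

namespace VPA

variable (M : VPA A)

theorem runAux_nil_stack (w : List A) (q : M.Q) : M.runAux w q [] = (q, []) := by
  induction w with
  | nil => rfl
  | cons _ w ih => exact ih

theorem runAux_cons_cons (a : A) (w : List A) (q : M.Q) (G : M.Γ) (s : List M.Γ) :
    M.runAux (a :: w) q (G :: s) = M.runAux w (M.δ a q G).1 ((M.δ a q G).2 ++ s) := rfl

theorem runAux_append (u v : List A) (q : M.Q) (s : List M.Γ) :
    M.runAux (u ++ v) q s = M.runAux v (M.runAux u q s).1 (M.runAux u q s).2 := by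
  induction u generalizing q s with
  | nil => rfl
  | cons a u ih =>
    cases s with
    | nil => exact ih q []
    | cons G s => exact ih _ _

theorem runAux_of_wellMatched {w : List A} (hw : WellMatched w) (q : M.Q) (G : M.Γ)
    (s : List M.Γ) : M.runAux w q (G :: s) = ((M.runAux w q [G]).1, G :: s) := by
  induction hw generalizing q G s with
  | nil => rfl
  | intern c hc =>
    simp only [runAux, M.int_spec c q G hc, List.singleton_append]
  | ext a b w ha hb hw ih =>
    obtain ⟨G', hG'⟩ := M.call_spec a q G ha
    simp only [List.cons_append, runAux, hG', runAux_append, List.nil_append]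
    rw [ih _ G' (G :: s), ih _ G' [G]]
    simp only [runAux, M.ret_spec b _ _ hb, List.nil_append]
  | append u v hu hv ihu ihv =>
    rw [runAux_append, runAux_append, ihu, ihu, ihv, ihv (s := [])]

/-- A well-matched word leaves the stack unchanged (`runAux_of_wellMatched`), so its effect
is recorded by a map on states for each top-of-stack symbol. -/
def Beh : Type := M.Γ → M.Q → M.Q

instance : Monoid M.Beh where
  one := fun _ q => q
  mul f g := fun G q => g G (f G q)
  mul_assoc _ _ _ := rfl
  one_mul _ := rfl
  mul_one _ := rfl

instance : Finite M.Beh := inferInstanceAs (Finite (M.Γ → M.Q → M.Q))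

def behHom : WM A →* M.Beh where
  toFun x := fun G q => (M.runAux x.1 q [G]).1
  map_one' := rfl
  map_mul' x y := funext₂ fun G q => by
    change (M.runAux (x.1 ++ y.1) q [G]).1 = _
    rw [runAux_append, runAux_of_wellMatched M x.2]
    rfl

theorem behHom_apply (x : WM A) (G : M.Γ) (q : M.Q) :
    M.behHom x G q = (M.runAux x.1 q [G]).1 := rfl

theorem behHom_extWord_factorsThrough (u v : List A) (h : WellMatched (u ++ v)) :
    Function.FactorsThrough (M.behHom ∘ extWord u v h) M.behHom := by
  intro x y hxy
  funext G q
  simp only [Function.comp_apply, behHom_apply, extWord_val, runAux_append]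
  rcases (M.runAux u q [G]).2 with _ | ⟨G', s⟩
  · simp only [runAux_nil_stack]
  · rw [runAux_of_wellMatched M x.2, runAux_of_wellMatched M y.2, ← behHom_apply,
      ← behHom_apply, hxy]

theorem mem_lang_iff_behHom (w : WM A) : w ∈ M.lang ↔ M.behHom w M.bot M.q0 ∈ M.F := by
  rw [lang, Set.mem_ofPred_eq, Accepts, runAux_of_wellMatched M w.2]
  exact and_iff_left rfl

end VPA

theorem IsVPL.exists_sepBound {L : Set (WM A)} (hL : IsVPL L) :
    ∃ n, ∀ x ∈ L, ∀ y ∉ L, SepBound n x y := by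
  obtain ⟨M, rfl⟩ := hL
  refine ⟨Nat.card M.Beh, fun x hx y hy => ⟨⟨M.Beh, fullExt _⟩,
    .ofFactorsThrough M.behHom M.behHom_extWord_factorsThrough, le_rfl, fun hxy => hy ?_⟩⟩
  rw [VPA.mem_lang_iff_behHom] at hx ⊢
  exact hxy ▸ hx

/-- A finite `Ext`-algebra on at most `n` elements, coded on `Fin n` by its multiplication
table, its unit, the images of internal letters and the operations `ext_{[a],[b]}`; these
generate the image of any morphism out of `WM A`. -/
structure ExtCode (A : Type) (n : ℕ) where
  mul : Fin n → Fin n → Fin n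
  one : Fin n
  intern : A → Fin n
  callRet : A → A → Fin n → Fin n

instance {n : ℕ} [Finite A] : Finite (ExtCode A n) :=
  Finite.of_injective (fun d : ExtCode A n => (d.mul, d.one, d.intern, d.callRet)) <| by
    rintro ⟨⟩ ⟨⟩ h
    simp_all only [Prod.mk.injEq]

/-- Runs all codes in parallel; a call pushes the current state vector with the call letter,
the matching return multiplies it by the corresponding `callRet` operation. -/
abbrev codeVPA [Finite A] (n : ℕ) (F : Set (ExtCode A n → Fin n)) : VPA A where
  Q := ExtCode A n → Fin n
  q0 := fun d => d.one
  Γ := Option ((ExtCode A n → Fin n) × A)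
  bot := none
  δ a q G := match VPAlphabet.kind a with
    | .intern => (fun d => d.mul (q d) (d.intern a), [G])
    | .call => (fun d => d.one, [some (q, a), G])
    | .ret => (match G with
        | some (p, b) => fun d => d.mul (p d) (d.callRet b a (q d))
        | none => q, [])
  F := F
  call_spec a q G h := ⟨some (q, a), by simp only [h]⟩
  ret_spec a q G h := by simp only [h]
  int_spec a q G h := by simp only [h]

theorem codeVPA_runAux_congr [Finite A] {n : ℕ} (F F' : Set (ExtCode A n → Fin n)) (w : List A)
    (q : ExtCode A n → Fin n) (s : List (Option ((ExtCode A n → Fin n) × A))) :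
    (codeVPA n F).runAux w q s = (codeVPA n F').runAux w q s := by
  induction w generalizing q s with
  | nil => rfl
  | cons a w ih => cases s <;> exact ih _ _

section codeVPA

variable [Finite A] {n : ℕ} (F : Set (ExtCode A n → Fin n)) (q : ExtCode A n → Fin n)
  (G : Option ((ExtCode A n → Fin n) × A))

theorem codeVPA_δ_intern {a : A} (ha : VPAlphabet.kind a = .intern) :
    (codeVPA n F).δ a q G = (fun d => d.mul (q d) (d.intern a), [G]) := by
  simp only [codeVPA, ha]

theorem codeVPA_δ_call {a : A} (ha : VPAlphabet.kind a = .call) :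
    (codeVPA n F).δ a q G = (fun d => d.one, [some (q, a), G]) := by
  simp only [codeVPA, ha]

theorem codeVPA_δ_ret {b : A} (hb : VPAlphabet.kind b = .ret) (p : ExtCode A n → Fin n)
    (a : A) : (codeVPA n F).δ b q (some (p, a)) =
      (fun d => d.mul (p d) (d.callRet a b (q d)), []) := by
  simp only [codeVPA, hb]

end codeVPA

section ofHom

variable {R : Type*} [Monoid R] {ER : ExtAlgebra R} {n : ℕ} (φ : ExtHomWM A ER)
  (c : R ↪ Fin n)

/-- The `else` branches are junk values that no run of `codeVPA` ever reads. -/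
noncomputable def ExtCode.ofHom : ExtCode A n where
  mul p q := c (Function.invFun c p * Function.invFun c q)
  one := c 1
  intern a := if h : VPAlphabet.kind a = .intern then c (φ.toMonoidHom ⟨[a], .intern a h⟩)
    else c 1
  callRet a b p := if h : VPAlphabet.kind a = .call ∧ VPAlphabet.kind b = .ret then
      c ((φ.op [a] [b] (.ext a b [] h.1 h.2 .nil) : Function.End R) (Function.invFun c p))
    else p

@[simp] theorem ExtCode.ofHom_mul (r s : R) : (ofHom φ c).mul (c r) (c s) = c (r * s) := by
  simp [ofHom, Function.leftInverse_invFun c.injective _]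

@[simp] theorem ExtCode.ofHom_one : (ofHom φ c).one = c 1 := rfl

theorem ExtCode.ofHom_intern {a : A} (ha : VPAlphabet.kind a = .intern) :
    (ofHom φ c).intern a = c (φ.toMonoidHom ⟨[a], .intern a ha⟩) := dif_pos ha

theorem ExtCode.ofHom_callRet {a b : A} (ha : VPAlphabet.kind a = .call)
    (hb : VPAlphabet.kind b = .ret) (r : R) :
    (ofHom φ c).callRet a b (c r) =
      c ((φ.op [a] [b] (.ext a b [] ha hb .nil) : Function.End R) r) := by
  simp [ofHom, ha, hb, Function.leftInverse_invFun c.injective _]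

theorem codeVPA_runAux_ofHom [Finite A] (F : Set (ExtCode A n → Fin n)) (x : WM A)
    (q : ExtCode A n → Fin n) (G : Option ((ExtCode A n → Fin n) × A)) (r : R)
    (hq : q (.ofHom φ c) = c r) :
    ((codeVPA n F).runAux x.1 q [G]).1 (.ofHom φ c) = c (r * φ.toMonoidHom x) := by
  obtain ⟨w, hw⟩ := x
  induction hw generalizing q G r with
  | nil =>
    change q _ = c (r * φ.toMonoidHom 1)
    rw [map_one, mul_one, hq]
  | intern a ha =>
    rw [VPA.runAux_cons_cons, codeVPA_δ_intern F q G ha]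
    exact (congrArg₂ _ hq (ExtCode.ofHom_intern φ c ha)).trans (ExtCode.ofHom_mul φ c _ _)
  | ext a b w ha hb hw ih =>
    have hcall : (codeVPA n F).runAux (a :: w ++ [b]) q [G] =
        (codeVPA n F).runAux (w ++ [b]) (fun d => d.one) [some (q, a), G] := by
      rw [List.cons_append, VPA.runAux_cons_cons, codeVPA_δ_call F q G ha]
      rfl
    rw [hcall, VPA.runAux_append, VPA.runAux_of_wellMatched _ hw, VPA.runAux_cons_cons,
      codeVPA_δ_ret F _ hb]
    change (ExtCode.ofHom φ c).mul (q _) ((ExtCode.ofHom φ c).callRet a b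
      (((codeVPA n F).runAux w (fun d => d.one) [some (q, a)]).1 _)) = _
    rw [ih _ _ 1 rfl, one_mul, hq, ExtCode.ofHom_callRet φ c ha hb, ExtCode.ofHom_mul]
    exact congrArg (fun t => c (r * t)) (φ.op_spec [a] [b] _ ⟨w, hw⟩)
  | append u v hu hv ihu ihv =>
    rw [VPA.runAux_append, VPA.runAux_of_wellMatched _ hu (s := [])]
    rw [ihv _ _ (r * φ.toMonoidHom ⟨u, hu⟩) (ihu q G r hq), mul_assoc]
    exact congrArg (fun t => c (r * t)) (map_mul φ.toMonoidHom ⟨u, hu⟩ ⟨v, hv⟩).symm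

end ofHom

def codeRun [Finite A] (n : ℕ) (x : WM A) : ExtCode A n → Fin n :=
  ((codeVPA n Set.univ).runAux x.1 (fun d => d.one) [none]).1

theorem not_sepBound_of_codeRun_eq [Finite A] {n : ℕ} {x y : WM A}
    (h : codeRun n x = codeRun n y) : ¬ SepBound n x y := by
  rintro ⟨R, φ, hcard, hne⟩
  let c : R.carrier ↪ Fin n := (Finite.equivFin R.carrier).toEmbedding.trans (Fin.castLEEmb hcard)
  have hrun (z : WM A) : codeRun n z (.ofHom φ c) = c (φ.toMonoidHom z) := by
    rw [codeRun, codeVPA_runAux_ofHom φ c _ z _ none 1 rfl, one_mul]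
  exact hne (c.injective (by rw [← hrun, ← hrun, h]))

theorem codeVPA_mem_lang_iff [Finite A] {n : ℕ} (F : Set (ExtCode A n → Fin n)) (x : WM A) :
    x ∈ (codeVPA n F).lang ↔ codeRun n x ∈ F := by
  rw [VPA.lang, Set.mem_ofPred_eq, VPA.Accepts, VPA.runAux_of_wellMatched _ x.2,
    codeVPA_runAux_congr F Set.univ]
  exact and_iff_left rfl

theorem isVPL_of_codeRun [Finite A] {L : Set (WM A)} (n : ℕ)
    (hL : ∀ x y, codeRun n x = codeRun n y → x ∈ L → y ∈ L) : IsVPL L := by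
  refine ⟨codeVPA n (codeRun n '' L), Set.ext fun x => ?_⟩
  rw [codeVPA_mem_lang_iff]
  exact ⟨fun hx => ⟨x, hx, rfl⟩, fun ⟨y, hy, hxy⟩ => hL y x hxy hy⟩

section Profinite

variable [Finite A]

theorem WM.totallyBounded_univ : TotallyBounded (Set.univ : Set (WM A)) := by
  refine Metric.totallyBounded_of_finite_discretization fun ε hε => ?_
  obtain ⟨n, hn⟩ := exists_pow_lt_of_lt_one hε (by norm_num : (2 : ℝ)⁻¹ < 1)
  have : Fintype (ExtCode A n → Fin n) := Fintype.ofFinite _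
  exact ⟨_, this, fun x => codeRun n x.1, fun x y hxy =>
    (WM.dist_lt_of_not_sepBound (not_sepBound_of_codeRun_eq hxy)).trans hn⟩

instance : CompactSpace (Completion (WM A)) :=
  Completion.compactSpace_of_totallyBounded WM.totallyBounded_univ

theorem IsVPL.uniformContinuous_boolIndicator {L : Set (WM A)} (hL : IsVPL L) :
    UniformContinuous L.boolIndicator := by
  obtain ⟨n, hn⟩ := hL.exists_sepBound
  have hfar : ∀ x ∈ L, ∀ y ∉ L, ¬ dist x y < (2 : ℝ)⁻¹ ^ n := fun x hx y hy =>
    (WM.inv_two_pow_le_dist_of_sepBound (ne_of_mem_of_not_mem hx hy) (hn x hx y hy)).not_gt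
  refine Metric.uniformContinuous_boolIndicator_iff.2
    ⟨(2 : ℝ)⁻¹ ^ n, by positivity, fun x y hxy => ?_⟩
  exact ⟨fun hx => by_contra fun hy => hfar x hx y hy hxy,
    fun hy => by_contra fun hx => hfar y hy x hx (dist_comm x y ▸ hxy)⟩

theorem isVPL_of_uniformContinuous_boolIndicator {L : Set (WM A)}
    (hL : UniformContinuous L.boolIndicator) : IsVPL L := by
  obtain ⟨ε, hε, hL⟩ := Metric.uniformContinuous_boolIndicator_iff.1 hL
  obtain ⟨n, hn⟩ := exists_pow_lt_of_lt_one hε (by norm_num : (2 : ℝ)⁻¹ < 1)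
  exact isVPL_of_codeRun n fun x y hxy =>
    (hL x y ((WM.dist_lt_of_not_sepBound (not_sepBound_of_codeRun_eq hxy)).trans hn)).1

end Profinite

open UniformSpace in
/-- A language of well-matched words is a VPL iff its closure in the completion is
clopen; `L ↦ closure L` and `K ↦ K ∩ WM(A)` are mutually inverse isomorphisms of
Boolean algebras between VPLs and clopen sets. -/
theorem statement17 {A : Type} [VPAlphabet A] [Finite A] :
    (∀ L : Set (WM A), IsVPL L ↔
      IsClopen (closure ((fun w : WM A => (w : Completion (WM A))) '' L))) ∧
    (∀ L : Set (WM A), IsVPL L →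
      (fun w : WM A => (w : Completion (WM A))) ⁻¹'
        closure ((fun w : WM A => (w : Completion (WM A))) '' L) = L) ∧
    (∀ K : Set (Completion (WM A)), IsClopen K →
      closure ((fun w : WM A => (w : Completion (WM A))) ''
        ((fun w : WM A => (w : Completion (WM A))) ⁻¹' K)) = K) ∧
    (∀ K : Set (Completion (WM A)), IsClopen K →
      IsVPL ((fun w : WM A => (w : Completion (WM A))) ⁻¹' K)) ∧
    (∀ L₁ L₂ : Set (WM A), IsVPL L₁ → IsVPL L₂ →
      closure ((fun w : WM A => (w : Completion (WM A))) '' (L₁ ∪ L₂)) =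
        closure ((fun w : WM A => (w : Completion (WM A))) '' L₁) ∪
          closure ((fun w : WM A => (w : Completion (WM A))) '' L₂)) ∧
    (∀ L : Set (WM A), IsVPL L →
      closure ((fun w : WM A => (w : Completion (WM A))) '' Lᶜ) =
        (closure ((fun w : WM A => (w : Completion (WM A))) '' L))ᶜ) := by
  have isVPL_preimage (K : Set (Completion (WM A))) (hK : IsClopen K) :
      IsVPL (((↑) : WM A → Completion (WM A)) ⁻¹' K) :=
    isVPL_of_uniformContinuous_boolIndicator
      (Completion.uniformContinuous_boolIndicator_preimage_coe hK)
  refine ⟨fun L => ⟨fun hL => Completion.isClopen_closure_image_coe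
      hL.uniformContinuous_boolIndicator, fun hL => ?_⟩,
    fun L _ => Completion.preimage_coe_closure_image L,
    fun K hK => Completion.closure_image_coe_preimage hK,
    isVPL_preimage,
    fun L₁ L₂ _ _ => by rw [Set.image_union, closure_union],
    fun L hL => Completion.closure_image_coe_compl hL.uniformContinuous_boolIndicator⟩
  simpa only [Completion.preimage_coe_closure_image] using isVPL_preimage _ hL
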